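/- arXiv:0904.1367 — 2 statements merged into one kernel-verified Lean document; each statement's English description precedes it below -/
import Mathlib

section
/- Let ρ be a convenient relation on a finite set A, let ρ̂ be the minimal equivalence relation on A containing ρ, and let B be an equivalence class of ρ̂. Then the elements of B generate either a ρ-cycle or a ρ-chain; in the first case the graph of the restriction of ρ to B is exactly the set {(b₀,b₁), …, (b_{n-1},b_n), (b_n,b₀)} of that cycle, and in the second case it is exactly the set {(b₀,b₁), …, (b_{n-1},b_n)} of that chain. -/
/-! Take an injective `ρ`-path `b 0 → ⋯ → b n` of maximal length through a point of `B`
(lengths are bounded by the cardinality of `A`). By maximality every predecessor of `b 0` and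
every successor of `b n` already lies on the path, and since no point has two predecessors or two
successors, the only such edge can be `b n → b 0`. So the range of the path is closed under
`ρ`-neighbours and is therefore the whole class: a cycle if `ρ (b n) (b 0)`, a chain otherwise. -/

/-- A binary relation `ρ` on `A` is convenient if it is irreflexive and every element
has at most one successor and at most one predecessor. -/
def Convenient {A : Type*} (ρ : A → A → Prop) : Prop :=
  (∀ a b, ρ a b → a ≠ b) ∧
  (∀ a b c, ρ a b → ρ a c → b = c) ∧
  (∀ a b c, ρ b a → ρ c a → b = c)

/-- `B` is an equivalence class of the minimal equivalence relation containing `ρ`. -/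
def IsEquivClass {A : Type*} (ρ : A → A → Prop) (B : Set A) : Prop :=
  ∃ a : A, B = {b | Relation.EqvGen ρ a b}

section

open Function Set Relation

variable {A : Type*} {ρ : A → A → Prop}

theorem Convenient.rightUnique (hρ : Convenient ρ) : Relator.RightUnique ρ :=
  fun a _ _ ↦ hρ.2.1 a _ _

theorem Convenient.leftUnique (hρ : Convenient ρ) : Relator.LeftUnique ρ :=
  fun _ _ c ↦ hρ.2.2 c _ _

theorem Relation.EqvGen.mem_iff_mem {S : Set A} (hS : ∀ x y, ρ x y → (x ∈ S ↔ y ∈ S))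
    {a c : A} (h : EqvGen ρ a c) : a ∈ S ↔ c ∈ S := by
  induction h with
  | rel x y hxy => exact hS x y hxy
  | refl => rfl
  | symm _ _ _ ih => exact ih.symm
  | trans _ _ _ _ _ ih₁ ih₂ => exact ih₁.trans ih₂

def IsRelPath (ρ : A → A → Prop) {n : ℕ} (b : Fin (n + 1) → A) : Prop :=
  Injective b ∧ ∀ i : Fin n, ρ (b i.castSucc) (b i.succ)

namespace IsRelPath

variable {n : ℕ} {b : Fin (n + 1) → A}

theorem cons (hb : IsRelPath ρ b) {x : A} (hx : ρ x (b 0)) (hxb : x ∉ range b) :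
    IsRelPath ρ (Fin.cons x b : Fin (n + 2) → A) := by
  refine ⟨Fin.cons_injective_iff.2 ⟨hxb, hb.1⟩, fun i ↦ ?_⟩
  induction i using Fin.cases with
  | zero => simpa using hx
  | succ j => simpa [← Fin.succ_castSucc] using hb.2 j

theorem snoc (hb : IsRelPath ρ b) {y : A} (hy : ρ (b (Fin.last n)) y) (hyb : y ∉ range b) :
    IsRelPath ρ (Fin.snoc b y : Fin (n + 2) → A) := by
  refine ⟨Fin.snoc_injective_iff.2 ⟨hb.1, hyb⟩, fun i ↦ ?_⟩
  induction i using Fin.lastCases with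
  | last => simpa using hy
  | cast j => rw [Fin.succ_castSucc, Fin.snoc_castSucc, Fin.snoc_castSucc]; exact hb.2 j

theorem eqvGen (hb : IsRelPath ρ b) (i j : Fin (n + 1)) : EqvGen ρ (b i) (b j) := by
  have from_zero : ∀ k, EqvGen ρ (b 0) (b k) := by
    intro k
    induction k using Fin.induction with
    | zero => exact .refl _
    | succ k ih => exact ih.trans _ _ _ (.rel _ _ (hb.2 k))
  exact (from_zero i).symm.trans _ _ _ (from_zero j)

theorem eq_last_of_rel_zero (hρ : Relator.RightUnique ρ) (hb : IsRelPath ρ b) {i : Fin (n + 1)}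
    (h : ρ (b i) (b 0)) : i = Fin.last n := by
  induction i using Fin.lastCases with
  | last => rfl
  | cast j => exact absurd (hb.1 (hρ (hb.2 j) h)) (Fin.succ_ne_zero j)

theorem eq_zero_of_last_rel (hρ : Relator.LeftUnique ρ) (hb : IsRelPath ρ b) {j : Fin (n + 1)}
    (h : ρ (b (Fin.last n)) (b j)) : j = 0 := by
  induction j using Fin.cases with
  | zero => rfl
  | succ i => exact absurd (hb.1 (hρ (hb.2 i) h)) (Fin.castSucc_lt_last i).ne

theorem mem_range_iff_of_rel (hr : Relator.RightUnique ρ) (hl : Relator.LeftUnique ρ)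
    (hb : IsRelPath ρ b) (hpred : ∀ x, ρ x (b 0) → x ∈ range b)
    (hsucc : ∀ y, ρ (b (Fin.last n)) y → y ∈ range b) {x y : A} (h : ρ x y) :
    x ∈ range b ↔ y ∈ range b := by
  constructor
  · rintro ⟨i, rfl⟩
    induction i using Fin.lastCases with
    | last => exact hsucc y h
    | cast j => exact ⟨j.succ, hr (hb.2 j) h⟩
  · rintro ⟨j, rfl⟩
    induction j using Fin.cases with
    | zero => exact hpred x h
    | succ i => exact ⟨i.castSucc, hl (hb.2 i) h⟩

theorem range_eq_setOf_eqvGen (hr : Relator.RightUnique ρ) (hl : Relator.LeftUnique ρ)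
    (hb : IsRelPath ρ b) (hpred : ∀ x, ρ x (b 0) → x ∈ range b)
    (hsucc : ∀ y, ρ (b (Fin.last n)) y → y ∈ range b) {a : A} (ha : a ∈ range b) :
    range b = {c | EqvGen ρ a c} := by
  obtain ⟨i, rfl⟩ := ha
  ext c
  refine ⟨fun ⟨j, hj⟩ ↦ hj ▸ hb.eqvGen i j, fun h ↦ ?_⟩
  exact (h.mem_iff_mem fun _ _ ↦ hb.mem_range_iff_of_rel hr hl hpred hsucc).1 ⟨i, rfl⟩

theorem restrict_rel_iff_of_rel_last_zero (hr : Relator.RightUnique ρ) (hb : IsRelPath ρ b)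
    (hcyc : ρ (b (Fin.last n)) (b 0)) (x y : A) :
    (ρ x y ∧ x ∈ range b ∧ y ∈ range b) ↔
      ((∃ i : Fin n, x = b i.castSucc ∧ y = b i.succ) ∨ (x = b (Fin.last n) ∧ y = b 0)) := by
  constructor
  · rintro ⟨h, ⟨i, rfl⟩, -⟩
    induction i using Fin.lastCases with
    | last => exact .inr ⟨rfl, hr h hcyc⟩
    | cast j => exact .inl ⟨j, rfl, hr h (hb.2 j)⟩
  · rintro (⟨i, rfl, rfl⟩ | ⟨rfl, rfl⟩)
    · exact ⟨hb.2 i, mem_range_self _, mem_range_self _⟩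
    · exact ⟨hcyc, mem_range_self _, mem_range_self _⟩

theorem restrict_rel_iff_of_not_rel_last (hr : Relator.RightUnique ρ) (hb : IsRelPath ρ b)
    (hlast : ∀ y, ¬ ρ (b (Fin.last n)) y) (x y : A) :
    (ρ x y ∧ x ∈ range b ∧ y ∈ range b) ↔ (∃ i : Fin n, x = b i.castSucc ∧ y = b i.succ) := by
  constructor
  · rintro ⟨h, ⟨i, rfl⟩, -⟩
    induction i using Fin.lastCases with
    | last => exact absurd h (hlast y)
    | cast j => exact ⟨j, rfl, hr h (hb.2 j)⟩
  · rintro ⟨i, rfl, rfl⟩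
    exact ⟨hb.2 i, mem_range_self _, mem_range_self _⟩

end IsRelPath

theorem exists_saturated_isRelPath [Finite A] (ρ : A → A → Prop) (a : A) :
    ∃ n, ∃ b : Fin (n + 1) → A, IsRelPath ρ b ∧ a ∈ range b ∧
      (∀ x, ρ x (b 0) → x ∈ range b) ∧ ∀ y, ρ (b (Fin.last n)) y → y ∈ range b := by
  classical
  let P n := ∃ b : Fin (n + 1) → A, IsRelPath ρ b ∧ a ∈ range b
  have hP0 : P 0 :=
    ⟨fun _ ↦ a, ⟨fun i j _ ↦ Subsingleton.elim (α := Fin 1) i j, Fin.elim0⟩, 0, rfl⟩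
  have hbound : ∀ n, P n → n ≤ Nat.card A := fun n ⟨b, hb, _⟩ ↦
    (by simpa using Nat.card_le_card_of_injective b hb.1 : n < Nat.card A).le
  obtain ⟨b, hb, ha⟩ : P (Nat.findGreatest P (Nat.card A)) :=
    Nat.findGreatest_spec (Nat.zero_le _) hP0
  have hmax : ¬ P (Nat.findGreatest P (Nat.card A) + 1) := fun h ↦
    (Nat.le_findGreatest (hbound _ h) h).not_gt (Nat.lt_succ_self _)
  refine ⟨_, b, hb, ha, fun x hx ↦ ?_, fun y hy ↦ ?_⟩
  · by_contra hxb
    exact hmax ⟨_, hb.cons hx hxb, by simp [ha]⟩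
  · by_contra hyb
    exact hmax ⟨_, hb.snoc hy hyb, by simp [ha]⟩

end

/-- Every equivalence class `B` of the equivalence closure of a convenient relation `ρ`
generates either a `ρ`-cycle or a `ρ`-chain, and the graph of the restriction of `ρ` to
`B` is exactly the set of pairs of that cycle, respectively of that chain. -/
theorem equiv_class_is_cycle_or_chain {A : Type*} [Fintype A]
    (ρ : A → A → Prop) (hρ : Convenient ρ) (B : Set A) (hB : IsEquivClass ρ B) :
    (∃ n : ℕ, 1 ≤ n ∧ ∃ b : Fin (n + 1) → A, Function.Injective b ∧ Set.range b = B ∧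
      ∀ x y : A, (ρ x y ∧ x ∈ B ∧ y ∈ B) ↔
        ((∃ i : Fin n, x = b i.castSucc ∧ y = b i.succ) ∨ (x = b (Fin.last n) ∧ y = b 0))) ∨
    (∃ (n : ℕ) (b : Fin (n + 1) → A), Function.Injective b ∧ Set.range b = B ∧
      (∀ a : A, ¬ ρ a (b 0)) ∧ (∀ a : A, ¬ ρ (b (Fin.last n)) a) ∧
      ∀ x y : A, (ρ x y ∧ x ∈ B ∧ y ∈ B) ↔
        (∃ i : Fin n, x = b i.castSucc ∧ y = b i.succ)) := by
  obtain ⟨a, rfl⟩ := hB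
  obtain ⟨n, b, hb, ha, hpred, hsucc⟩ := exists_saturated_isRelPath ρ a
  have hr := hρ.rightUnique
  have hl := hρ.leftUnique
  rw [← hb.range_eq_setOf_eqvGen hr hl hpred hsucc ha]
  by_cases hcyc : ρ (b (Fin.last n)) (b 0)
  · have hn : 1 ≤ n := Nat.one_le_iff_ne_zero.2 fun hn ↦ by
      subst hn
      exact hρ.1 _ _ hcyc rfl
    exact .inl ⟨n, hn, b, hb.1, rfl, hb.restrict_rel_iff_of_rel_last_zero hr hcyc⟩
  · have hhead : ∀ x, ¬ ρ x (b 0) := fun x hx ↦ by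
      obtain ⟨i, rfl⟩ := hpred x hx
      exact hcyc (hb.eq_last_of_rel_zero hr hx ▸ hx)
    have hlast : ∀ y, ¬ ρ (b (Fin.last n)) y := fun y hy ↦ by
      obtain ⟨j, rfl⟩ := hsucc y hy
      exact hcyc (hb.eq_zero_of_last_rel hl hy ▸ hy)
    exact .inr ⟨n, b, hb.1, rfl, hhead, hlast, hb.restrict_rel_iff_of_not_rel_last hr hlast⟩
end

section
/- Let A be a finite set with at least 3 elements and O a complete cyclic order on A. Then the cyclic order O_{ρ_O} induced by the convenient relation ρ_O is itself complete: for all pairwise distinct b₁, b₂, b₃ ∈ A there is a permutation (u,v,w) of (b₁,b₂,b₃) with O_{ρ_O}(u,v,w). -/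
/-- A ternary relation `O` is a cyclic order if it is asymmetric, transitive and cyclic. -/
def IsCyclicOrder {A : Type*} (O : A → A → A → Prop) : Prop :=
  (∀ x y z, O x y z → ¬ O z y x) ∧
  (∀ x y z u, O x y z → O x z u → O x y u) ∧
  (∀ x y z, O x y z → O y z x)

/-- A cyclic order is complete if any three pairwise distinct elements admit a
permutation that is cyclically ordered. -/
def IsCompleteCyclicOrder {A : Type*} (O : A → A → A → Prop) : Prop :=
  IsCyclicOrder O ∧
  ∀ x y z : A, x ≠ y → y ≠ z → x ≠ z →
    (O x y z ∨ O x z y ∨ O y x z ∨ O y z x ∨ O z x y ∨ O z y x)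

/-- The binary relation induced by a cyclic order `O`: `a ρ_O b` iff `O a b c` holds for
every `c ∉ {a, b}`. -/
def rhoOf {A : Type*} (O : A → A → A → Prop) (a b : A) : Prop :=
  ∀ c, c ≠ a → c ≠ b → O a b c

/-- The ternary relation induced by a convenient relation `ρ`: `(a₁, a₂, a₃) ∈ O_ρ` iff
`a₁, a₂, a₃` are pairwise distinct and there is a cyclic sequence
`a₁ = x₀, …, x_{m₁} = a₂ = y₀, …, y_{m₂} = a₃ = z₀, …, z_{m₃} = a₁` whose consecutive
members are `ρ`-related and whose intermediate members avoid `{a₁, a₂, a₃}`. -/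
def Orho {A : Type*} (ρ : A → A → Prop) (a₁ a₂ a₃ : A) : Prop :=
  a₁ ≠ a₂ ∧ a₂ ≠ a₃ ∧ a₃ ≠ a₁ ∧
  ∃ (m₁ m₂ m₃ : ℕ) (x : Fin (m₁ + 1) → A) (y : Fin (m₂ + 1) → A) (z : Fin (m₃ + 1) → A),
    x 0 = a₁ ∧ x (Fin.last m₁) = a₂ ∧
    y 0 = a₂ ∧ y (Fin.last m₂) = a₃ ∧
    z 0 = a₃ ∧ z (Fin.last m₃) = a₁ ∧
    (∀ i : Fin m₁, ρ (x i.castSucc) (x i.succ)) ∧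
    (∀ i : Fin m₂, ρ (y i.castSucc) (y i.succ)) ∧
    (∀ i : Fin m₃, ρ (z i.castSucc) (z i.succ)) ∧
    (∀ i : Fin (m₁ + 1), i ≠ 0 → i ≠ Fin.last m₁ → x i ≠ a₁ ∧ x i ≠ a₂ ∧ x i ≠ a₃) ∧
    (∀ i : Fin (m₂ + 1), i ≠ 0 → i ≠ Fin.last m₂ → y i ≠ a₁ ∧ y i ≠ a₂ ∧ y i ≠ a₃) ∧
    (∀ i : Fin (m₃ + 1), i ≠ 0 → i ≠ Fin.last m₃ → z i ≠ a₁ ∧ z i ≠ a₂ ∧ z i ≠ a₃)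

/-! Cutting the cycle at `a` turns `O a · ·` into a linear order on `A` with least element `a`.
Listing `A` in this order and returning to `a` gives a closed walk through all of `A` whose
consecutive elements are `ρ_O`-related, because nothing lies cyclically between them. If `O a p q`,
then `a`, `p`, `q` occur on this walk in this order, and its three arcs witness `O_{ρ_O} a p q`. -/

theorem orho_of_cycle {A : Type*} {ρ : A → A → Prop} {c : ℕ → A} {n i j : ℕ}
    (hi : 0 < i) (hij : i < j) (hjn : j < n) (hinj : Set.InjOn c (Set.Iio n))
    (hper : c n = c 0) (hchain : ∀ k < n, ρ (c k) (c (k + 1))) :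
    Orho ρ (c 0) (c i) (c j) := by
  have hne : ∀ k < n, ∀ l < n, k ≠ l → c k ≠ c l := fun k hk l hl hkl h => hkl (hinj hk hl h)
  have avoid : ∀ k, 0 < k → k < n → k ≠ i → k ≠ j → c k ≠ c 0 ∧ c k ≠ c i ∧ c k ≠ c j :=
    fun k hk hkn hki hkj => ⟨hne k hkn 0 (by omega) (by omega), hne k hkn i (by omega) hki,
      hne k hkn j hjn hkj⟩
  refine ⟨hne 0 (by omega) i (by omega) (by omega), hne i (by omega) j hjn (by omega),
    hne j hjn 0 (by omega) (by omega), i, j - i, n - j,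
    fun k => c k, fun k => c (i + k), fun k => c (j + k), ?_, ?_, ?_, ?_, ?_, ?_, ?_, ?_, ?_,
    ?_, ?_, ?_⟩
  all_goals simp only [Fin.val_zero, Fin.val_last, Fin.val_castSucc, Fin.val_succ, add_zero,
    Nat.add_sub_cancel' hij.le, Nat.add_sub_cancel' hjn.le, hper, ← add_assoc, ne_eq, Fin.ext_iff]
  all_goals intro k; have := k.isLt
  iterate 3 exact hchain _ (by omega)
  all_goals exact fun h0 hl => avoid _ (by omega) (by omega) (by omega) (by omega)

namespace IsCyclicOrder

variable {A : Type*} {O : A → A → A → Prop} {x y z u : A}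

theorem rotate (hO : IsCyclicOrder O) (h : O x y z) : O y z x := hO.2.2 x y z h

theorem trans (hO : IsCyclicOrder O) (h₁ : O x y z) (h₂ : O x z u) : O x y u :=
  hO.2.1 x y z u h₁ h₂

theorem not_swap (hO : IsCyclicOrder O) (h : O x y z) : ¬ O x z y :=
  fun h' => hO.1 x y z h (hO.rotate h')

theorem ne₁₂ (hO : IsCyclicOrder O) (h : O x y z) : x ≠ y := by
  rintro rfl
  exact hO.not_swap h (hO.rotate h)

theorem ne₂₃ (hO : IsCyclicOrder O) (h : O x y z) : y ≠ z := hO.ne₁₂ (hO.rotate h)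

theorem ne₃₁ (hO : IsCyclicOrder O) (h : O x y z) : z ≠ x :=
  hO.ne₁₂ (hO.rotate (hO.rotate h))

end IsCyclicOrder

theorem IsCompleteCyclicOrder.rel_or_rel_swap {A : Type*} {O : A → A → A → Prop}
    (hO : IsCompleteCyclicOrder O) {x y z : A} (hxy : x ≠ y) (hyz : y ≠ z) (hxz : x ≠ z) :
    O x y z ∨ O x z y := by
  have rot : ∀ {x y z}, O x y z → O y z x := hO.1.rotate
  rcases hO.2 x y z hxy hyz hxz with h | h | h | h | h | h
  · exact .inl h
  · exact .inr h
  · exact .inr (rot h)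
  · exact .inl (rot (rot h))
  · exact .inl (rot h)
  · exact .inr (rot (rot h))

def cutRel {A : Type*} (O : A → A → A → Prop) (a x y : A) : Prop :=
  x = a ∧ y ≠ a ∨ O a x y

theorem isStrictTotalOrder_cutRel {A : Type*} {O : A → A → A → Prop}
    (hO : IsCompleteCyclicOrder O) (a : A) : IsStrictTotalOrder A (cutRel O a) where
  irrefl x := by
    rintro (⟨rfl, h⟩ | h)
    exacts [h rfl, hO.1.ne₂₃ h rfl]
  trans x y z := by
    rintro (⟨rfl, hya⟩ | hxy) (⟨rfl, -⟩ | hyz)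
    · exact (hya rfl).elim
    · exact .inl ⟨rfl, hO.1.ne₃₁ hyz⟩
    · exact (hO.1.ne₃₁ hxy rfl).elim
    · exact .inr (hO.1.trans hxy hyz)
  trichotomous x y hxy hyx := by
    by_contra hne
    by_cases hxa : x = a
    · exact hxy (.inl ⟨hxa, fun hya => hne (hxa.trans hya.symm)⟩)
    by_cases hya : y = a
    · exact hyx (.inl ⟨hya, hxa⟩)
    rcases hO.rel_or_rel_swap (Ne.symm hxa) hne (Ne.symm hya) with h | h
    exacts [hxy (.inr h), hyx (.inr h)]

section cut

variable {A : Type*} {O : A → A → A → Prop} [LinearOrder A] {a : A}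

theorem cut_point_le (hlt : ∀ x y, x < y ↔ cutRel O a x y) (b : A) : a ≤ b :=
  (eq_or_ne b a).elim (fun h => h.ge) fun h => ((hlt a b).2 (.inl ⟨rfl, h⟩)).le

theorem rhoOf_of_covBy (hO : IsCyclicOrder O) (hlt : ∀ x y, x < y ↔ cutRel O a x y)
    {x y : A} (hxy : x ⋖ y) : rhoOf O x y := by
  have hlt' : ∀ {u v}, u < v → v ≠ a ∧ (u = a ∨ O a u v) := fun {u v} huv => by
    rcases (hlt u v).1 huv with ⟨rfl, hv⟩ | h
    exacts [⟨hv, .inl rfl⟩, ⟨hO.ne₃₁ h, .inr h⟩]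
  intro c hcx hcy
  rcases lt_or_gt_of_ne hcx with hcx | hxc
  · obtain ⟨hxa, rfl | hacx⟩ := hlt' hcx
    · exact hO.rotate ((hlt' hxy.lt).2.resolve_left hxa)
    · have haxy := (hlt' hxy.lt).2.resolve_left hxa
      exact hO.trans (hO.rotate haxy) (hO.rotate (hO.rotate hacx))
  · obtain ⟨-, rfl | hayc⟩ := hlt' ((not_lt.1 (hxy.2 hxc)).lt_of_ne (Ne.symm hcy))
    · exact (hlt' hxy.lt).1.elim rfl
    rcases (hlt' hxy.lt).2 with rfl | haxy
    · exact hayc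
    · exact hO.rotate (hO.rotate
        (hO.trans (hO.rotate hayc) (hO.rotate (hO.rotate haxy))))

theorem rhoOf_of_isTop (hO : IsCyclicOrder O) (hlt : ∀ x y, x < y ↔ cutRel O a x y)
    {m : A} (hm : IsTop m) : rhoOf O m a := by
  intro c hcm hca
  rcases (hlt c m).1 ((hm c).lt_of_ne hcm) with ⟨rfl, -⟩ | h
  exacts [(hca rfl).elim, hO.rotate (hO.rotate h)]


theorem exists_rhoOf_cycle_of_cut [Fintype A] (hO : IsCyclicOrder O)
    (hlt : ∀ x y, x < y ↔ cutRel O a x y) :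
    ∃ (n : ℕ) (c : ℕ → A), c 0 = a ∧ c n = a ∧ Set.InjOn c (Set.Iio n) ∧
      (∀ b, ∃ k < n, c k = b) ∧ (∀ k < n, rhoOf O (c k) (c (k + 1))) ∧
      ∀ i j, 0 < i → i < j → j < n → O a (c i) (c j) := by
  set n := Fintype.card A
  have hn : 0 < n := Fintype.card_pos_iff.2 ⟨a⟩
  let e : Fin n ≃o A := monoEquivOfFin A rfl
  let c : ℕ → A := fun k => if h : k < n then e ⟨k, h⟩ else a
  have hc : ∀ k (h : k < n), c k = e ⟨k, h⟩ := fun k h => dif_pos h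
  have hcn : ∀ k, n ≤ k → c k = a := fun k h => dif_neg (by omega)
  have hc0 : c 0 = a := by
    rw [hc 0 hn]
    refine le_antisymm ?_ (cut_point_le hlt _)
    rw [← e.apply_symm_apply a]
    exact e.monotone (Fin.le_def.2 (Nat.zero_le _))
  refine ⟨n, c, hc0, hcn n le_rfl, ?_, ?_, ?_, ?_⟩
  · intro k hk l hl hkl
    rw [hc k hk, hc l hl] at hkl
    exact Fin.mk.inj (e.injective hkl)
  · intro b
    exact ⟨e.symm b, (e.symm b).isLt, by rw [hc _ (e.symm b).isLt]; exact e.apply_symm_apply b⟩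
  · intro k hk
    rw [hc k hk]
    rcases Nat.lt_or_ge (k + 1) n with hk1 | hk1
    · rw [hc _ hk1]
      refine rhoOf_of_covBy hO hlt ((apply_covBy_apply_iff e).2 ⟨?_, fun l h1 h2 => ?_⟩)
      · exact Fin.lt_def.2 (Nat.lt_succ_self k)
      · rw [Fin.lt_def] at h1 h2
        simp only at h1 h2
        omega
    · rw [hcn _ hk1]
      refine rhoOf_of_isTop hO hlt fun b => ?_
      rw [← e.apply_symm_apply b]
      exact e.monotone (Fin.le_def.2 (by simp only; omega))
  · intro i j hi hij hjn
    rw [hc i (by omega), hc j hjn]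
    refine ((hlt _ _).1 (e.strictMono (Fin.lt_def.2 hij))).resolve_left fun h => ?_
    have h := h.1
    rw [← hc0, hc 0 hn] at h
    exact hi.ne' (Fin.mk.inj (e.injective h))

end cut

theorem IsCompleteCyclicOrder.exists_rhoOf_cycle {A : Type*} [Fintype A]
    {O : A → A → A → Prop} (hO : IsCompleteCyclicOrder O) (a : A) :
    ∃ (n : ℕ) (c : ℕ → A), c 0 = a ∧ c n = a ∧ Set.InjOn c (Set.Iio n) ∧
      (∀ b, ∃ k < n, c k = b) ∧ (∀ k < n, rhoOf O (c k) (c (k + 1))) ∧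
      ∀ i j, 0 < i → i < j → j < n → O a (c i) (c j) := by
  classical
  have := isStrictTotalOrder_cutRel hO a
  let _ : LinearOrder A := linearOrderOfSTO (cutRel O a)
  exact exists_rhoOf_cycle_of_cut hO.1 fun _ _ => Iff.rfl

theorem IsCompleteCyclicOrder.orho_rhoOf {A : Type*} [Fintype A] {O : A → A → A → Prop}
    (hO : IsCompleteCyclicOrder O) {a p q : A} (h : O a p q) : Orho (rhoOf O) a p q := by
  obtain ⟨n, c, rfl, hcn, hinj, hsurj, hchain, hmono⟩ := hO.exists_rhoOf_cycle a
  obtain ⟨i, hin, rfl⟩ := hsurj p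
  obtain ⟨j, hjn, rfl⟩ := hsurj q
  have hi : 0 < i := Nat.pos_of_ne_zero fun hi => hO.1.ne₁₂ h (by rw [hi])
  have hj : 0 < j := Nat.pos_of_ne_zero fun hj => hO.1.ne₃₁ h (by rw [hj])
  have hij : i < j := by
    rcases lt_trichotomy i j with hij | rfl | hji
    · exact hij
    · exact (hO.1.ne₂₃ h rfl).elim
    · exact (hO.1.not_swap h (hmono j i hj hji hin)).elim
  exact orho_of_cycle hi hij hjn hinj hcn hchain

theorem Orho_rhoOf_complete_general {A : Type*} [Fintype A]
    (O : A → A → A → Prop) (hO : IsCompleteCyclicOrder O) :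
    ∀ b₁ b₂ b₃ : A, b₁ ≠ b₂ → b₂ ≠ b₃ → b₁ ≠ b₃ →
      (Orho (rhoOf O) b₁ b₂ b₃ ∨ Orho (rhoOf O) b₁ b₃ b₂ ∨
       Orho (rhoOf O) b₂ b₁ b₃ ∨ Orho (rhoOf O) b₂ b₃ b₁ ∨
       Orho (rhoOf O) b₃ b₁ b₂ ∨ Orho (rhoOf O) b₃ b₂ b₁) := by
  intro b₁ b₂ b₃ h₁₂ h₂₃ h₁₃
  rcases hO.rel_or_rel_swap h₁₂ h₂₃ h₁₃ with h | h
  · exact .inl (hO.orho_rhoOf h)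
  · exact .inr (.inl (hO.orho_rhoOf h))

/-- For a complete cyclic order `O` on a finite set with at least three elements, the
cyclic order `O_{ρ_O}` induced by the convenient relation `ρ_O` is complete. -/
theorem Orho_rhoOf_complete {A : Type*} [Fintype A] (hA : 3 ≤ Fintype.card A)
    (O : A → A → A → Prop) (hO : IsCompleteCyclicOrder O) :
    ∀ b₁ b₂ b₃ : A, b₁ ≠ b₂ → b₂ ≠ b₃ → b₁ ≠ b₃ →
      (Orho (rhoOf O) b₁ b₂ b₃ ∨ Orho (rhoOf O) b₁ b₃ b₂ ∨
       Orho (rhoOf O) b₂ b₁ b₃ ∨ Orho (rhoOf O) b₂ b₃ b₁ ∨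
       Orho (rhoOf O) b₃ b₁ b₂ ∨ Orho (rhoOf O) b₃ b₂ b₁) :=
  Orho_rhoOf_complete_general O hO
end
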